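/- arXiv:1908.03027 — 3 statements merged into one kernel-verified Lean document; each statement's English description precedes it below -/
import Mathlib

section
/- Let X be a compact Hausdorff space and let M be a self-conjugate function space on X. Then for every triple of distinct points x, x', z in the Choquet boundary Ch(M), there exists a function h ∈ M such that |h(x)| ≠ |h(x')| and h(z) = 0. -/
/-- The evaluation functional at a point, as an element of the dual of a subspace of `C(X, ℂ)`. -/
noncomputable def evalDual {X : Type*} [TopologicalSpace X] [CompactSpace X]
    (S : Submodule ℂ C(X, ℂ)) (x : X) : StrongDual ℂ ↥S :=
  LinearMap.mkContinuous
    { toFun := fun f => (f : C(X, ℂ)) x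
      map_add' := fun f g => rfl
      map_smul' := fun c f => rfl }
    1
    (fun f => by
      exact le_of_le_of_eq (ContinuousMap.norm_coe_le_norm (f : C(X, ℂ)) x) (one_mul _).symm)

/-- The Choquet boundary of a subspace `S` of `C(X, ℂ)`: the set of points `x ∈ X` such that
the evaluation functional at `x` is an extreme point of the closed unit ball of the dual of `S`. -/
noncomputable def ChoquetBoundary {X : Type*} [TopologicalSpace X] [CompactSpace X]
    (S : Submodule ℂ C(X, ℂ)) : Set X :=
  {x | evalDual S x ∈ Set.extremePoints ℝ (Metric.closedBall (0 : StrongDual ℂ ↥S) 1)}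


/-! If the claim failed, applying it to `f - f z` would give `‖f x - f z‖ = ‖f x' - f z‖` for
every `f ∈ M`. Two linear functionals of equal modulus differ by a unimodular factor `c`, and
self-conjugacy of `M` makes `c` real, so `c = ± 1`. If `c = 1` then `M` does not separate `x`
from `x'`; if `c = -1` then `δ_z` is the midpoint of `δ_x` and `δ_x'`, which is impossible for
an extreme point of the dual unit ball unless `δ_x = δ_z`, i.e. unless `M` fails to separate `x`
from `z`. -/

open ComplexConjugate

theorem LinearMap.exists_eq_smul_of_ker_le {𝕜 E : Type*} [Field 𝕜] [AddCommGroup E] [Module 𝕜 E]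
    {φ ψ : E →ₗ[𝕜] 𝕜} (h : ker φ ≤ ker ψ) : ∃ c : 𝕜, ψ = c • φ := by
  have hψ := mem_span_of_iInf_ker_le_ker (ι := Unit) (L := fun _ ↦ φ) (K := ψ) (by simpa using h)
  rw [Set.range_const, Submodule.mem_span_singleton] at hψ
  obtain ⟨c, hc⟩ := hψ
  exact ⟨c, hc.symm⟩

theorem LinearMap.exists_norm_eq_one_eq_smul_of_norm_apply_eq {𝕜 E : Type*} [NormedField 𝕜]
    [AddCommGroup E] [Module 𝕜 E] {φ ψ : E →ₗ[𝕜] 𝕜} (h : ∀ v, ‖φ v‖ = ‖ψ v‖) :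
    ∃ c : 𝕜, ‖c‖ = 1 ∧ ψ = c • φ := by
  obtain ⟨c, hc⟩ := exists_eq_smul_of_ker_le (φ := φ) (ψ := ψ) fun v hv ↦ by
    simpa [mem_ker, ← norm_eq_zero, ← h v] using hv
  by_cases hφ : φ = 0
  · exact ⟨1, norm_one, by simpa [hφ] using hc⟩
  obtain ⟨v, hv⟩ : ∃ v, φ v ≠ 0 := by simpa [LinearMap.ext_iff] using hφ
  refine ⟨c, ?_, hc⟩
  have hnorm := h v
  rw [hc, smul_apply, smul_eq_mul, norm_mul] at hnorm
  exact (mul_eq_right₀ (norm_ne_zero_iff.2 hv)).1 hnorm.symm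

theorem Complex.eq_one_or_eq_neg_one_of_conj_eq {c : ℂ} (hconj : conj c = c) (hc : ‖c‖ = 1) :
    c = 1 ∨ c = -1 := by
  obtain ⟨r, rfl⟩ := Complex.conj_eq_iff_real.1 hconj
  rw [Complex.norm_real, Real.norm_eq_abs] at hc
  rcases abs_eq zero_le_one |>.1 hc with rfl | rfl <;> simp

section

variable {X : Type*} [TopologicalSpace X] {S : Submodule ℂ C(X, ℂ)}

theorem conj_eq_of_forall_sub_eq_mul_sub (hS : ∀ f ∈ S, star f ∈ S) {x x' z : X} {c : ℂ}
    (hc : ∀ f : S, (f : C(X, ℂ)) x' - (f : C(X, ℂ)) z = c * ((f : C(X, ℂ)) x - (f : C(X, ℂ)) z))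
    {f : C(X, ℂ)} (hfS : f ∈ S) (hf : f x ≠ f z) : conj c = c := by
  have hstar := hc ⟨star f, hS f hfS⟩
  have hf' := congrArg conj (hc ⟨f, hfS⟩)
  simp only [ContinuousMap.star_apply, map_sub, map_mul] at hstar hf'
  refine mul_right_cancel₀ ?_ (hf'.symm.trans hstar)
  rw [← map_sub]
  exact (map_ne_zero _).2 (sub_ne_zero.2 hf)

variable [CompactSpace X]

@[simp]
theorem evalDual_apply (x : X) (f : S) : evalDual S x f = (f : C(X, ℂ)) x := rfl

theorem evalDual_mem_closedBall (x : X) : evalDual S x ∈ Metric.closedBall 0 1 := by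
  rw [Metric.mem_closedBall]
  exact (dist_zero_right (evalDual S x)).le.trans (LinearMap.mkContinuous_norm_le _ zero_le_one _)

theorem evalDual_eq_of_midpoint_eq_of_mem_choquetBoundary {x x' z : X}
    (hz : z ∈ ChoquetBoundary S) (hmid : midpoint ℝ (evalDual S x) (evalDual S x') = evalDual S z) :
    evalDual S x = evalDual S z :=
  hz.2 (evalDual_mem_closedBall x) (evalDual_mem_closedBall x')
    (hmid ▸ midpoint_mem_openSegment _ _)

end

theorem step_one_separation_general
    {X : Type*} [TopologicalSpace X] [CompactSpace X]
    (M : Submodule ℂ C(X, ℂ))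
    -- `M` is a self-conjugate function space
    (h1M : (1 : C(X, ℂ)) ∈ M)
    (hMsep : ∀ x x' : X, x ≠ x' → ∃ f ∈ M, f x ≠ f x')
    (hMconj : ∀ f ∈ M, star f ∈ M)
    -- three distinct points of the Choquet boundary of `M`
    (x x' z : X)
    (hz : z ∈ ChoquetBoundary M)
    (hxx' : x ≠ x') (hxz : x ≠ z) :
    ∃ h ∈ M, ‖h x‖ ≠ ‖h x'‖ ∧ h z = 0 := by
  by_contra! hcon
  have hnorm : ∀ f : M, ‖(evalDual M x - evalDual M z) f‖ = ‖(evalDual M x' - evalDual M z) f‖ := by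
    intro f
    by_contra hne
    exact hcon (f - (f : C(X, ℂ)) z • 1) (M.sub_mem f.2 (M.smul_mem _ h1M)) (by simpa using hne)
      (by simp)
  obtain ⟨c, hc1, hc⟩ := LinearMap.exists_norm_eq_one_eq_smul_of_norm_apply_eq hnorm
  have hcf : ∀ f : M, (f : C(X, ℂ)) x' - (f : C(X, ℂ)) z
      = c * ((f : C(X, ℂ)) x - (f : C(X, ℂ)) z) := fun f ↦ by
    simpa using LinearMap.congr_fun hc f
  obtain ⟨f₀, hf₀M, hf₀⟩ := hMsep x z hxz
  rcases Complex.eq_one_or_eq_neg_one_of_conj_eq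
    (conj_eq_of_forall_sub_eq_mul_sub hMconj hcf hf₀M hf₀) hc1 with rfl | rfl
  · obtain ⟨g, hgM, hg⟩ := hMsep x x' hxx'
    exact hg (by simpa using (hcf ⟨g, hgM⟩).symm)
  · have hmid : midpoint ℝ (evalDual M x) (evalDual M x') = evalDual M z := by
      ext f
      simp only [midpoint_eq_smul_add, invOf_eq_inv, smul_add, add_apply, smul_apply,
        evalDual_apply, Complex.real_smul, Complex.ofReal_inv, Complex.ofReal_ofNat]
      linear_combination hcf f / 2
    have hδ := DFunLike.congr_fun
      (evalDual_eq_of_midpoint_eq_of_mem_choquetBoundary hz hmid) ⟨f₀, hf₀M⟩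
    exact hf₀ (by simpa using hδ)

theorem step_one_separation
    {X : Type*} [TopologicalSpace X] [CompactSpace X] [T2Space X]
    (M : Submodule ℂ C(X, ℂ))
    -- `M` is a self-conjugate function space
    (h1M : (1 : C(X, ℂ)) ∈ M)
    (hMsep : ∀ x x' : X, x ≠ x' → ∃ f ∈ M, f x ≠ f x')
    (hMconj : ∀ f ∈ M, star f ∈ M)
    -- three distinct points of the Choquet boundary of `M`
    (x x' z : X)
    (hx : x ∈ ChoquetBoundary M) (hx' : x' ∈ ChoquetBoundary M)
    (hz : z ∈ ChoquetBoundary M)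
    (hxx' : x ≠ x') (hxz : x ≠ z) (hx'z : x' ≠ z) :
    ∃ h ∈ M, ‖h x‖ ≠ ‖h x'‖ ∧ h z = 0 :=
  step_one_separation_general M h1M hMsep hMconj x x' z hz hxx' hxz
end

section
/- Let Ω be a nonempty open subset of ℝ^p and let K be a compact subset of Ω. Let 𝒟_K = { f|_K : f ∈ C^∞(Ω) }, the space of restrictions to K of smooth real-valued functions on Ω, regarded as a subspace of C_ℝ(K). For 1 ≤ k ≤ p, let P_k : K → ℝ be the k-th coordinate projection P_k(x₁,…,x_p) = x_k. Let {T_n} be a sequence of positive linear maps from 𝒟_K into C_ℝ(K) such that T_n 1 → 1, T_n P_k → P_k for each k, and T_n(Σ_{k=1}^p P_k²) → Σ_{k=1}^p P_k², all uniformly on K. Then ‖T_n f − f‖ → 0 as n → ∞ for every f ∈ 𝒟_K. -/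
open Filter Topology

variable {p : ℕ}

/-- The `k`-th coordinate projection, as an element of `C(K, ℝ)`. -/
def projFun (K : TopologicalSpace.Compacts (Fin p → ℝ)) (k : Fin p) :
    C(↥(K : Set (Fin p → ℝ)), ℝ) :=
  ⟨fun x => (x : Fin p → ℝ) k, (continuous_apply k).comp continuous_subtype_val⟩

/-- The sum of the squares of the coordinate projections, as an element of `C(K, ℝ)`. -/
def sumSqFun (K : TopologicalSpace.Compacts (Fin p → ℝ)) :
    C(↥(K : Set (Fin p → ℝ)), ℝ) :=
  ⟨fun x => ∑ k : Fin p, ((x : Fin p → ℝ) k) ^ 2,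
    continuous_finset_sum _ fun k _ => ((continuous_apply k).comp continuous_subtype_val).pow 2⟩

/-- The space `𝒟_K` of restrictions to `K` of smooth functions on `Ω`, as a subspace of
`C(K, ℝ)`. -/
def DK (Ω : Set (Fin p → ℝ)) (K : TopologicalSpace.Compacts (Fin p → ℝ)) :
    Submodule ℝ C(↥(K : Set (Fin p → ℝ)), ℝ) where
  carrier := {f | ∃ g : (Fin p → ℝ) → ℝ, ContDiffOn ℝ (⊤ : ℕ∞) g Ω ∧
    ∀ x : ↥(K : Set (Fin p → ℝ)), f x = g x}
  add_mem' := by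
    rintro f₁ f₂ ⟨g₁, hg₁, he₁⟩ ⟨g₂, hg₂, he₂⟩
    exact ⟨g₁ + g₂, hg₁.add hg₂, fun x => by
      rw [ContinuousMap.add_apply, he₁ x, he₂ x]; rfl⟩
  zero_mem' := ⟨0, contDiffOn_const, fun _ => rfl⟩
  smul_mem' := by
    rintro c f ⟨g, hg, he⟩
    exact ⟨c • g, hg.const_smul c, fun x => by
      rw [ContinuousMap.smul_apply, he x]; rfl⟩

lemma one_mem_DK (Ω : Set (Fin p → ℝ)) (K : TopologicalSpace.Compacts (Fin p → ℝ)) :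
    (1 : C(↥(K : Set (Fin p → ℝ)), ℝ)) ∈ DK Ω K :=
  ⟨fun _ => 1, contDiffOn_const, fun _ => rfl⟩

lemma projFun_mem_DK (Ω : Set (Fin p → ℝ)) (K : TopologicalSpace.Compacts (Fin p → ℝ))
    (k : Fin p) : projFun K k ∈ DK Ω K :=
  ⟨fun x => x k, ((ContinuousLinearMap.proj k : (Fin p → ℝ) →L[ℝ] ℝ).contDiff).contDiffOn,
    fun _ => rfl⟩

lemma sumSqFun_mem_DK (Ω : Set (Fin p → ℝ)) (K : TopologicalSpace.Compacts (Fin p → ℝ)) :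
    sumSqFun K ∈ DK Ω K :=
  ⟨fun x => ∑ k : Fin p, (x k) ^ 2,
    (ContDiff.sum fun k _ =>
      ((ContinuousLinearMap.proj k : (Fin p → ℝ) →L[ℝ] ℝ).contDiff).pow 2).contDiffOn,
    fun _ => rfl⟩

set_option maxHeartbeats 1600000 in
/-- Korovkin-type theorem for `𝒟_K`, uniform convergence. -/
theorem korovkin_DK_uniform
    (Ω : Set (Fin p → ℝ)) (hΩopen : IsOpen Ω) (hΩne : Ω.Nonempty)
    (K : TopologicalSpace.Compacts (Fin p → ℝ)) (hKΩ : (K : Set (Fin p → ℝ)) ⊆ Ω)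
    -- a sequence of positive linear maps from `𝒟_K` into `C(K, ℝ)`
    (T : ℕ → (↥(DK Ω K) →ₗ[ℝ] C(↥(K : Set (Fin p → ℝ)), ℝ)))
    (hpos : ∀ n, ∀ f : ↥(DK Ω K),
      (∀ x, 0 ≤ (f : C(↥(K : Set (Fin p → ℝ)), ℝ)) x) → ∀ x, 0 ≤ T n f x)
    -- uniform convergence on the test functions `1`, `P_k`, `Σ P_k²`
    (h1 : Tendsto (fun n => ‖T n ⟨1, one_mem_DK Ω K⟩ - 1‖) atTop (nhds 0))
    (hP : ∀ k : Fin p,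
      Tendsto (fun n => ‖T n ⟨projFun K k, projFun_mem_DK Ω K k⟩ - projFun K k‖)
        atTop (nhds 0))
    (hP2 : Tendsto (fun n => ‖T n ⟨sumSqFun K, sumSqFun_mem_DK Ω K⟩ - sumSqFun K‖)
        atTop (nhds 0)) :
    -- conclusion: uniform convergence on all of `𝒟_K`
    ∀ f : ↥(DK Ω K),
      Tendsto (fun n => ‖T n f - (f : C(↥(K : Set (Fin p → ℝ)), ℝ))‖) atTop (nhds 0) := by
  intro f
  have hK : CompactSpace ↥(K : Set (Fin p → ℝ)) := isCompact_iff_compactSpace.mp K.2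
  set F : C(↥(K : Set (Fin p → ℝ)), ℝ) := (f : C(↥(K : Set (Fin p → ℝ)), ℝ)) with hF
  set e1 : ↥(DK Ω K) := ⟨1, one_mem_DK Ω K⟩ with he1
  set eP : Fin p → ↥(DK Ω K) := fun k => ⟨projFun K k, projFun_mem_DK Ω K k⟩ with heP
  set eS : ↥(DK Ω K) := ⟨sumSqFun K, sumSqFun_mem_DK Ω K⟩ with heS
  obtain ⟨R, hR0, hR⟩ : ∃ R, 0 ≤ R ∧ ∀ x : ↥(K : Set (Fin p → ℝ)), ‖(x : Fin p → ℝ)‖ ≤ R := by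
    obtain ⟨C, hC⟩ := (K.2.isBounded).exists_norm_le
    exact ⟨max C 0, le_max_right _ _, fun x => (hC _ x.2).trans (le_max_left _ _)⟩
  have hRk : ∀ (x : ↥(K : Set (Fin p → ℝ))) (k : Fin p), |(x : Fin p → ℝ) k| ≤ R := by
    intro x k
    calc |(x : Fin p → ℝ) k| = ‖(x : Fin p → ℝ) k‖ := rfl
      _ ≤ ‖(x : Fin p → ℝ)‖ := norm_le_pi_norm _ k
      _ ≤ R := hR x
  set M : ℝ := ‖F‖ with hM
  have hM0 : 0 ≤ M := norm_nonneg _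
  -- the error sequence on test functions
  set β : ℕ → ℝ := fun n => ‖T n e1 - 1‖ + (∑ k, ‖T n (eP k) - projFun K k‖)
      + ‖T n eS - sumSqFun K‖ with hβdef
  have hβ0 : ∀ n, 0 ≤ β n := fun n =>
    add_nonneg (add_nonneg (norm_nonneg _) (Finset.sum_nonneg fun k _ => norm_nonneg _))
      (norm_nonneg _)
  have hβ : Tendsto β atTop (nhds 0) := by
    rw [hβdef]
    have hs : Tendsto (fun n => ∑ k, ‖T n (eP k) - projFun K k‖) atTop (nhds 0) := by
      have := tendsto_finset_sum (Finset.univ : Finset (Fin p))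
        (fun k (_ : k ∈ Finset.univ) => hP k)
      rwa [Finset.sum_const_zero] at this
    have h0 : ((0:ℝ) + 0) + 0 = 0 := by norm_num
    exact h0 ▸ ((h1.add hs).add hP2)
  have hβ1 : ∀ n, ‖T n e1 - 1‖ ≤ β n := fun n => by
    have h2 : (0:ℝ) ≤ ∑ k, ‖T n (eP k) - projFun K k‖ :=
      Finset.sum_nonneg fun k _ => norm_nonneg _
    have h3 : (0:ℝ) ≤ ‖T n eS - sumSqFun K‖ := norm_nonneg _
    simp only [hβdef]; linarith
  have hβP : ∀ n, (∑ k, ‖T n (eP k) - projFun K k‖) ≤ β n := fun n => by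
    have h3 : (0:ℝ) ≤ ‖T n eS - sumSqFun K‖ := norm_nonneg _
    have h1' : (0:ℝ) ≤ ‖T n e1 - 1‖ := norm_nonneg _
    simp only [hβdef]; linarith
  have hβS : ∀ n, ‖T n eS - sumSqFun K‖ ≤ β n := fun n => by
    have h2 : (0:ℝ) ≤ ∑ k, ‖T n (eP k) - projFun K k‖ :=
      Finset.sum_nonneg fun k _ => norm_nonneg _
    have h1' : (0:ℝ) ≤ ‖T n e1 - 1‖ := norm_nonneg _
    simp only [hβdef]; linarith
  -- monotonicity and absolute-value bound
  have mono : ∀ n (g h : ↥(DK Ω K)),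
      (∀ y, (g : C(↥(K : Set (Fin p → ℝ)), ℝ)) y ≤ (h : C(↥(K : Set (Fin p → ℝ)), ℝ)) y) →
      ∀ y, T n g y ≤ T n h y := by
    intro n g h hle y
    have h0 := hpos n (h - g) (fun z => by
      have := hle z
      simp only [Submodule.coe_sub, ContinuousMap.sub_apply]
      linarith) y
    rw [map_sub] at h0
    simp only [ContinuousMap.sub_apply] at h0
    linarith
  have absb : ∀ n (g h : ↥(DK Ω K)),
      (∀ y, |(g : C(↥(K : Set (Fin p → ℝ)), ℝ)) y| ≤ (h : C(↥(K : Set (Fin p → ℝ)), ℝ)) y) →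
      ∀ y, |T n g y| ≤ T n h y := by
    intro n g h hle y
    rw [abs_le]
    refine ⟨?_, mono n g h (fun z => (abs_le.mp (hle z)).2) y⟩
    have hm := mono n (-g) h (fun z => by
      have := (abs_le.mp (hle z)).1
      simp only [Submodule.coe_neg, ContinuousMap.neg_apply]
      linarith) y
    rw [map_neg] at hm
    simp only [ContinuousMap.neg_apply] at hm
    linarith
  -- the auxiliary quadratic
  set Q : ↥(K : Set (Fin p → ℝ)) → ↥(DK Ω K) := fun x =>
    eS - (2:ℝ) • (∑ k, ((x : Fin p → ℝ) k) • eP k) + (∑ k, ((x : Fin p → ℝ) k)^2) • e1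
    with hQdef
  have hQval : ∀ x y : ↥(K : Set (Fin p → ℝ)),
      ((Q x : C(↥(K : Set (Fin p → ℝ)), ℝ)) y)
        = ∑ k, ((y : Fin p → ℝ) k - (x : Fin p → ℝ) k)^2 := by
    intro x y
    simp only [hQdef, he1, heP, heS, Submodule.coe_add, Submodule.coe_sub, Submodule.coe_smul,
      AddSubmonoidClass.coe_finset_sum, ContinuousMap.add_apply, ContinuousMap.sub_apply,
      ContinuousMap.smul_apply, ContinuousMap.sum_apply, ContinuousMap.one_apply,
      smul_eq_mul, mul_one, Finset.mul_sum]
    show (∑ k, ((y : Fin p → ℝ) k)^2) - (∑ k, 2 * ((x : Fin p → ℝ) k * (y : Fin p → ℝ) k))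
        + (∑ k, ((x : Fin p → ℝ) k)^2) = _
    rw [← Finset.sum_sub_distrib, ← Finset.sum_add_distrib]
    exact Finset.sum_congr rfl fun k _ => by ring
  have hQ0 : ∀ x y : ↥(K : Set (Fin p → ℝ)),
      0 ≤ (Q x : C(↥(K : Set (Fin p → ℝ)), ℝ)) y := by
    intro x y
    rw [hQval]
    exact Finset.sum_nonneg fun k _ => sq_nonneg _
  -- bound for T n (Q x) x
  have hTQ : ∀ n (x : ↥(K : Set (Fin p → ℝ))),
      T n (Q x) x ≤ (1 + 2 * R + p * R ^ 2) * β n := by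
    intro n x
    have expand : T n (Q x) = T n eS - (2:ℝ) • (∑ k, ((x : Fin p → ℝ) k) • T n (eP k))
        + (∑ k, ((x : Fin p → ℝ) k)^2) • T n e1 := by
      simp only [hQdef, map_add, map_sub, map_smul, map_sum]
    set a : ℝ := T n eS x - sumSqFun K x with ha
    set b : ℝ := ∑ k, ((x : Fin p → ℝ) k) * (T n (eP k) x - projFun K k x) with hb
    set C2 : ℝ := ∑ k, ((x : Fin p → ℝ) k)^2 with hC2
    set e : ℝ := T n e1 x - 1 with he
    have hproj : ∀ k, projFun K k x = (x : Fin p → ℝ) k := fun k => rfl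
    have hsS : sumSqFun K x = ∑ k, ((x : Fin p → ℝ) k)^2 := rfl
    have hsplit : ∑ k, ((x : Fin p → ℝ) k) * (T n (eP k) x - projFun K k x)
        = (∑ k, ((x : Fin p → ℝ) k) * T n (eP k) x) - ∑ k, ((x : Fin p → ℝ) k)^2 := by
      rw [← Finset.sum_sub_distrib]
      exact Finset.sum_congr rfl fun k _ => by rw [hproj k]; ring
    have eval : T n (Q x) x = a - 2 * b + C2 * e := by
      rw [ha, hb, hC2, he, expand]
      simp only [ContinuousMap.add_apply, ContinuousMap.sub_apply, ContinuousMap.smul_apply,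
        ContinuousMap.sum_apply, smul_eq_mul]
      rw [hsplit, hsS]
      ring
    have b1 : |e| ≤ β n := by
      have h' : |e| ≤ ‖T n e1 - 1‖ := by
        have h0 := (T n e1 - 1).norm_coe_le_norm x
        rw [ContinuousMap.sub_apply, ContinuousMap.one_apply, Real.norm_eq_abs] at h0
        rwa [he]
      exact h'.trans (hβ1 n)
    have bS : |a| ≤ β n := by
      have h' : |a| ≤ ‖T n eS - sumSqFun K‖ := by
        have h0 := (T n eS - sumSqFun K).norm_coe_le_norm x
        rw [ContinuousMap.sub_apply, Real.norm_eq_abs] at h0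
        rwa [ha]
      exact h'.trans (hβS n)
    have bP : |b| ≤ R * β n := by
      calc |b| ≤ ∑ k, |((x : Fin p → ℝ) k) * (T n (eP k) x - projFun K k x)| :=
            Finset.abs_sum_le_sum_abs _ _
        _ ≤ ∑ k, R * ‖T n (eP k) - projFun K k‖ := by
            refine Finset.sum_le_sum fun k _ => ?_
            rw [abs_mul]
            refine mul_le_mul (hRk x k) ?_ (abs_nonneg _) hR0
            have h0 := (T n (eP k) - projFun K k).norm_coe_le_norm x
            rwa [ContinuousMap.sub_apply, Real.norm_eq_abs] at h0
        _ = R * ∑ k, ‖T n (eP k) - projFun K k‖ := by rw [Finset.mul_sum]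
        _ ≤ R * β n := mul_le_mul_of_nonneg_left (hβP n) hR0
    have bC : C2 ≤ p * R ^ 2 := by
      rw [hC2]
      calc (∑ k, ((x : Fin p → ℝ) k)^2) ≤ ∑ _k : Fin p, R ^ 2 := by
            refine Finset.sum_le_sum fun k _ => ?_
            calc ((x : Fin p → ℝ) k)^2 = |(x : Fin p → ℝ) k| ^ 2 := (sq_abs _).symm
              _ ≤ R ^ 2 := pow_le_pow_left₀ (abs_nonneg _) (hRk x k) 2
        _ = p * R ^ 2 := by simp [Finset.sum_const, mul_comm]
    have bCnn : (0:ℝ) ≤ C2 := Finset.sum_nonneg fun k _ => sq_nonneg _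
    have habs : |a - 2 * b + C2 * e| ≤ |a| + 2 * |b| + C2 * |e| := by
      have h1' := abs_add_le (a - 2 * b) (C2 * e)
      have h2' := abs_sub a (2 * b)
      have h3' : |C2 * e| = C2 * |e| := by rw [abs_mul, abs_of_nonneg bCnn]
      have h4' : |2 * b| = 2 * |b| := by rw [abs_mul]; norm_num
      linarith [h1', h2', h3', h4']
    have hCe : C2 * |e| ≤ (p * R ^ 2) * β n :=
      mul_le_mul bC b1 (abs_nonneg _) (by positivity)
    calc T n (Q x) x ≤ |a - 2 * b + C2 * e| := eval ▸ le_abs_self _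
      _ ≤ |a| + 2 * |b| + C2 * |e| := habs
      _ ≤ β n + 2 * (R * β n) + (p * R ^ 2) * β n := by linarith
      _ = (1 + 2 * R + p * R ^ 2) * β n := by ring
  set D : ℝ := 1 + 2 * R + p * R ^ 2 with hD
  have hD0 : 0 ≤ D := by positivity
  -- main convergence
  rw [Metric.tendsto_nhds]
  intro ε' hε'
  set ε : ℝ := ε' / 2 with hε
  have hε0 : 0 < ε := by positivity
  -- uniform continuity of F
  have hUC : UniformContinuous F := CompactSpace.uniformContinuous_of_continuous F.continuous
  obtain ⟨δ, hδ0, hδ⟩ := Metric.uniformContinuous_iff.mp hUC ε hε0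
  set c : ℝ := 2 * M / δ ^ 2 with hc
  have hc0 : 0 ≤ c := by positivity
  -- pointwise inequality
  have hpt : ∀ x y : ↥(K : Set (Fin p → ℝ)),
      |F y - F x| ≤ ε + c * (Q x : C(↥(K : Set (Fin p → ℝ)), ℝ)) y := by
    intro x y
    rcases lt_or_ge (dist x y) δ with hlt | hge
    · have := hδ hlt
      rw [Real.dist_eq] at this
      have habs : |F y - F x| < ε := by rw [abs_sub_comm]; exact this
      have hq := mul_nonneg hc0 (hQ0 x y)
      linarith
    · have hd2 : δ ^ 2 ≤ (Q x : C(↥(K : Set (Fin p → ℝ)), ℝ)) y := by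
        rw [hQval]
        have hdle : dist x y ≤ Real.sqrt (∑ k, ((y : Fin p → ℝ) k - (x : Fin p → ℝ) k)^2) := by
          rw [Subtype.dist_eq]
          refine (dist_pi_le_iff (Real.sqrt_nonneg _)).2 fun k => ?_
          rw [Real.dist_eq]
          refine Real.abs_le_sqrt ?_
          have : ((x : Fin p → ℝ) k - (y : Fin p → ℝ) k)^2
              = ((y : Fin p → ℝ) k - (x : Fin p → ℝ) k)^2 := by ring
          rw [this]
          exact Finset.single_le_sum
            (f := fun j => ((y : Fin p → ℝ) j - (x : Fin p → ℝ) j)^2)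
            (fun j _ => sq_nonneg _) (Finset.mem_univ k)
        have hδd : δ ≤ Real.sqrt (∑ k, ((y : Fin p → ℝ) k - (x : Fin p → ℝ) k)^2) :=
          hge.trans hdle
        have hs0 : (0:ℝ) ≤ ∑ k, ((y : Fin p → ℝ) k - (x : Fin p → ℝ) k)^2 :=
          Finset.sum_nonneg fun k _ => sq_nonneg _
        calc δ ^ 2 ≤ (Real.sqrt (∑ k, ((y : Fin p → ℝ) k - (x : Fin p → ℝ) k)^2)) ^ 2 :=
              pow_le_pow_left₀ hδ0.le hδd 2
          _ = _ := Real.sq_sqrt hs0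
      have hFy : |F y| ≤ M := by
        have h0 := F.norm_coe_le_norm y; rwa [Real.norm_eq_abs] at h0
      have hFx : |F x| ≤ M := by
        have h0 := F.norm_coe_le_norm x; rwa [Real.norm_eq_abs] at h0
      have h2M : |F y - F x| ≤ 2 * M := by
        calc |F y - F x| ≤ |F y| + |F x| := abs_sub _ _
          _ ≤ 2 * M := by linarith
      have hcδ : c * δ ^ 2 = 2 * M := by
        rw [hc]; field_simp
      have := mul_le_mul_of_nonneg_left hd2 hc0
      rw [hcδ] at this
      linarith
  -- the key estimate
  have key : ∀ n (x : ↥(K : Set (Fin p → ℝ))),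
      |T n f x - F x| ≤ ε + (ε + c * D + M) * β n := by
    intro n x
    -- apply positivity to f - F x • e1 vs ε • e1 + c • Q x
    have hcomp := absb n (f - F x • e1) (ε • e1 + c • Q x) (fun y => by
      simp only [Submodule.coe_sub, Submodule.coe_add, Submodule.coe_smul, he1,
        ContinuousMap.sub_apply, ContinuousMap.add_apply, ContinuousMap.smul_apply,
        ContinuousMap.one_apply, smul_eq_mul, mul_one]
      exact hpt x y) x
    simp only [map_sub, map_add, map_smul] at hcomp
    simp only [ContinuousMap.sub_apply, ContinuousMap.add_apply, ContinuousMap.smul_apply,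
      smul_eq_mul] at hcomp
    -- bounds
    have b1 : |T n e1 x - 1| ≤ β n := by
      have h0 := (T n e1 - 1).norm_coe_le_norm x
      rw [ContinuousMap.sub_apply, ContinuousMap.one_apply, Real.norm_eq_abs] at h0
      exact h0.trans (hβ1 n)
    have hT1le : T n e1 x ≤ 1 + β n := by
      have := (abs_le.mp b1).2; linarith
    have hT1nn : 0 ≤ T n e1 x := hpos n e1 (fun z => by
      rw [he1]; exact zero_le_one) x
    have hFx : |F x| ≤ M := by
      have h0 := F.norm_coe_le_norm x; rwa [Real.norm_eq_abs] at h0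
    have hTQx := hTQ n x
    have hTQnn : 0 ≤ T n (Q x) x := hpos n (Q x) (hQ0 x) x
    have step1 : |T n f x - F x * T n e1 x| ≤ ε * (1 + β n) + c * (D * β n) := by
      have h1' : ε * T n e1 x ≤ ε * (1 + β n) := mul_le_mul_of_nonneg_left hT1le hε0.le
      have h2' : c * T n (Q x) x ≤ c * (D * β n) := by
        refine mul_le_mul_of_nonneg_left ?_ hc0
        exact hTQx
      linarith [hcomp]
    have step2 : |F x * T n e1 x - F x| ≤ M * β n := by
      have : F x * T n e1 x - F x = F x * (T n e1 x - 1) := by ring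
      rw [this, abs_mul]
      exact mul_le_mul hFx b1 (abs_nonneg _) hM0
    calc |T n f x - F x| = |(T n f x - F x * T n e1 x) + (F x * T n e1 x - F x)| := by
          rw [sub_add_sub_cancel]
      _ ≤ |T n f x - F x * T n e1 x| + |F x * T n e1 x - F x| := abs_add_le _ _
      _ ≤ ε * (1 + β n) + c * (D * β n) + M * β n := by linarith
      _ = ε + (ε + c * D + M) * β n := by ring
  -- conclude
  have hnorm : ∀ n, ‖T n f - F‖ ≤ ε + (ε + c * D + M) * β n := by
    intro n
    have hCnn : (0:ℝ) ≤ ε + (ε + c * D + M) * β n :=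
      add_nonneg hε0.le (mul_nonneg (by positivity) (hβ0 n))
    rw [ContinuousMap.norm_le _ hCnn]
    intro x
    rw [ContinuousMap.sub_apply, Real.norm_eq_abs]
    exact key n x
  have hcoeff : 0 < ε + c * D + M := by positivity
  have hev : ∀ᶠ n in atTop, β n < ε / (ε + c * D + M) := by
    have := hβ
    rw [Metric.tendsto_nhds] at this
    filter_upwards [this (ε / (ε + c * D + M)) (by positivity)] with n hn
    rw [Real.dist_eq, sub_zero, abs_of_nonneg (hβ0 n)] at hn
    exact hn
  filter_upwards [hev] with n hn
  rw [Real.dist_eq, sub_zero, abs_of_nonneg (norm_nonneg _)]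
  have : (ε + c * D + M) * β n < ε := by
    have := (mul_lt_mul_of_pos_left hn hcoeff)
    rwa [mul_div_cancel₀ _ (ne_of_gt hcoeff)] at this
  calc ‖T n f - F‖ ≤ ε + (ε + c * D + M) * β n := hnorm n
    _ < ε + ε := by linarith
    _ = ε' := by rw [hε]; ring
end

section
/- Let 𝕋 = {z ∈ ℂ : |z| = 1} be the unit circle and let {T_n} be a sequence of positive linear maps from C(𝕋) into C(𝕋) such that T_n 1 → 1 and T_n z → z uniformly on 𝕋 (where z denotes the identity function w ↦ w). Then ‖T_n f − f‖ → 0 as n → ∞ for every f ∈ C(𝕋). -/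
open Filter Topology

/-- The identity function `z : w ↦ w` as an element of `C(𝕋, ℂ)`, where `𝕋` is the unit
circle. -/
def circleIdFun : C(↥(Metric.sphere (0 : ℂ) 1), ℂ) :=
  ⟨fun z => (z : ℂ), continuous_subtype_val⟩

/-!
A positive map on `C(𝕋)` commutes with `star`, so it is enough to treat real-valued `f`.
Given `ε > 0`, uniform continuity gives `|f z - f x| ≤ ε + M |z - x|²` for all `x, z`, and
positivity turns this pointwise bound into `|T f x - f x · T 1 x| ≤ T (ε + M |· - x|²) x`.
On the circle `|z - x|² = 2 - x̄ z - x z̄` is a combination of `1`, `z` and `z̄ = star z`, so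
the right-hand side tends to `ε` uniformly in `x` once `T` is close to the identity on `1`
and `z`.
-/

open ComplexOrder ComplexStarModule

theorem Complex.neg_le_and_le_iff {a b : ℂ} :
    -b ≤ a ∧ a ≤ b ↔ a.im = 0 ∧ b.im = 0 ∧ ‖a‖ ≤ b.re := by
  simp only [Complex.le_def, Complex.neg_re, Complex.neg_im]
  constructor
  · rintro ⟨⟨hre, him⟩, hre', him'⟩
    refine ⟨by linarith, by linarith, ?_⟩
    rw [← Complex.abs_re_eq_norm.mpr (by linarith), abs_le]
    exact ⟨by linarith, hre'⟩
  · rintro ⟨ha, hb, h⟩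
    have hre := abs_le.mp ((Complex.abs_re_le_norm a).trans h)
    exact ⟨⟨by linarith, by rw [ha, hb, neg_zero]⟩, hre.2, by rw [ha, hb]⟩

theorem ContinuousMap.complex_nonneg_iff {X : Type*} [TopologicalSpace X] {f : C(X, ℂ)} :
    0 ≤ f ↔ ∀ z, (f z).im = 0 ∧ 0 ≤ (f z).re := by
  simp only [ContinuousMap.le_def, ContinuousMap.zero_apply, Complex.nonneg_iff, eq_comm, and_comm]

theorem ContinuousMap.im_apply_of_isSelfAdjoint {X : Type*} [TopologicalSpace X] {f : C(X, ℂ)}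
    (hf : IsSelfAdjoint f) (z : X) : (f z).im = 0 :=
  Complex.conj_eq_iff_im.mp (DFunLike.congr_fun hf.star_eq z)

theorem ContinuousMap.exists_norm_sub_le_add_mul_dist_sq {X E : Type*} [MetricSpace X]
    [CompactSpace X] [NormedAddCommGroup E] (f : C(X, E)) {ε : ℝ} (hε : 0 < ε) :
    ∃ M, 0 ≤ M ∧ ∀ x z, ‖f z - f x‖ ≤ ε + M * dist z x ^ 2 := by
  obtain ⟨δ, hδ, hfδ⟩ := Metric.uniformContinuous_iff.mp
    (CompactSpace.uniformContinuous_of_continuous f.continuous) ε hε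
  refine ⟨2 * ‖f‖ / δ ^ 2, by positivity, fun x z => ?_⟩
  have hM : 0 ≤ 2 * ‖f‖ / δ ^ 2 * dist z x ^ 2 := by positivity
  rcases lt_or_ge (dist z x) δ with hzx | hzx
  · have hclose : ‖f z - f x‖ < ε := by simpa only [dist_eq_norm] using hfδ hzx
    linarith
  · calc ‖f z - f x‖ ≤ ‖f z‖ + ‖f x‖ := norm_sub_le _ _
      _ ≤ 2 * ‖f‖ := by linarith [f.norm_coe_le_norm z, f.norm_coe_le_norm x]
      _ ≤ 2 * ‖f‖ / δ ^ 2 * dist z x ^ 2 := by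
          rw [div_mul_eq_mul_div, le_div_iff₀ (by positivity)]
          gcongr
      _ ≤ ε + 2 * ‖f‖ / δ ^ 2 * dist z x ^ 2 := le_add_of_nonneg_left hε.le

theorem tendsto_norm_sub_of_forall_isSelfAdjoint {E ι : Type*} [NormedAddCommGroup E]
    [NormedSpace ℂ E] [StarAddMonoid E] [StarModule ℂ E] {l : Filter ι} (T : ι → E →ₗ[ℂ] E)
    (h : ∀ g, IsSelfAdjoint g → Tendsto (fun n => ‖T n g - g‖) l (𝓝 0)) (f : E) :
    Tendsto (fun n => ‖T n f - f‖) l (𝓝 0) := by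
  have hsplit (n : ι) : ‖T n f - f‖ ≤ ‖T n (ℜ f) - ℜ f‖ + ‖T n (ℑ f) - ℑ f‖ := by
    conv_lhs => rw [← realPart_add_I_smul_imaginaryPart f]
    rw [map_add, map_smul, add_sub_add_comm, ← smul_sub]
    exact (norm_add_le _ _).trans_eq (by rw [norm_smul, Complex.norm_I, one_mul])
  exact squeeze_zero (fun n => norm_nonneg _) hsplit
    (by simpa using (h _ (ℜ f).2).add (h _ (ℑ f).2))

namespace PositiveLinearMap

variable {X : Type*} [TopologicalSpace X] (Φ : C(X, ℂ) →ₚ[ℂ] C(X, ℂ))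

theorem norm_apply_le_re_apply_of_neg_le_of_le {g h : C(X, ℂ)} (hhg : -h ≤ g) (hgh : g ≤ h)
    (x : X) : ‖Φ g x‖ ≤ (Φ h x).re := by
  have hΦhg : -Φ h ≤ Φ g := map_neg Φ h ▸ OrderHomClass.mono Φ hhg
  have hΦgh : Φ g ≤ Φ h := OrderHomClass.mono Φ hgh
  exact (Complex.neg_le_and_le_iff.mp ⟨hΦhg x, hΦgh x⟩).2.2

theorem norm_sub_apply_le [CompactSpace X] {f h : C(X, ℂ)} (hf : IsSelfAdjoint f)
    (hh : IsSelfAdjoint h) (x : X) (hfh : ∀ z, ‖f z - f x‖ ≤ (h z).re) :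
    ‖(Φ f - f) x‖ ≤ ‖Φ h x‖ + ‖f‖ * ‖Φ 1 - 1‖ := by
  set g := f - f x • 1
  have hg (z : X) : -h z ≤ g z ∧ g z ≤ h z := by
    refine Complex.neg_le_and_le_iff.mpr ⟨?_, ContinuousMap.im_apply_of_isSelfAdjoint hh z, ?_⟩
    · simp [g, ContinuousMap.im_apply_of_isSelfAdjoint hf]
    · simpa [g] using hfh z
  have hsplit : (Φ f - f) x = Φ g x + f x * (Φ 1 - 1) x := by
    simp only [g, map_sub, map_smul, ContinuousMap.sub_apply, ContinuousMap.smul_apply,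
      ContinuousMap.one_apply, smul_eq_mul]
    ring
  calc ‖(Φ f - f) x‖ ≤ ‖Φ g x‖ + ‖f x‖ * ‖(Φ 1 - 1) x‖ := by
        rw [hsplit, ← norm_mul]; exact norm_add_le _ _
    _ ≤ ‖Φ h x‖ + ‖f‖ * ‖Φ 1 - 1‖ := by
        gcongr
        · exact (Φ.norm_apply_le_re_apply_of_neg_le_of_le (fun z => (hg z).1) (fun z => (hg z).2)
            x).trans (Complex.re_le_norm _)
        · exact f.norm_coe_le_norm x
        · exact (Φ 1 - 1).norm_coe_le_norm x

end PositiveLinearMap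

local notation "𝕋" => Metric.sphere (0 : ℂ) 1

/-- `z ↦ |z - x|²`, expanded as `2 - x̄ z - x z̄` using `|z| = |x| = 1`. -/
noncomputable def circleSqDist (x : 𝕋) : C(𝕋, ℂ) :=
  (2 : ℂ) • 1 - (starRingEnd ℂ x) • circleIdFun - (x : ℂ) • star circleIdFun

theorem circleSqDist_apply (x z : 𝕋) : circleSqDist x z = ((dist z x ^ 2 : ℝ) : ℂ) := by
  have hconj (w : 𝕋) : (w : ℂ) * starRingEnd ℂ w = 1 := by
    rw [Complex.mul_conj, Complex.normSq_eq_norm_sq, mem_sphere_zero_iff_norm.mp w.2]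
    norm_num
  rw [Subtype.dist_eq, dist_eq_norm, ← Complex.normSq_eq_norm_sq, ← Complex.mul_conj]
  simp only [circleSqDist, circleIdFun, ContinuousMap.sub_apply, ContinuousMap.smul_apply,
    ContinuousMap.one_apply, ContinuousMap.star_apply, ContinuousMap.coe_mk, RCLike.star_def,
    smul_eq_mul, map_sub]
  linear_combination -hconj z - hconj x

theorem isSelfAdjoint_circleSqDist (x : 𝕋) : IsSelfAdjoint (circleSqDist x) := by
  ext z
  simp [circleSqDist_apply]

namespace PositiveLinearMap

variable (Φ : C(𝕋, ℂ) →ₚ[ℂ] C(𝕋, ℂ))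

theorem norm_apply_circleSqDist_self_le (x : 𝕋) :
    ‖Φ (circleSqDist x) x‖ ≤ 2 * ‖Φ 1 - 1‖ + 2 * ‖Φ circleIdFun - circleIdFun‖ := by
  have hx : ‖(x : ℂ)‖ = 1 := mem_sphere_zero_iff_norm.mp x.2
  have hΦ : Φ (circleSqDist x) - circleSqDist x = (2 : ℂ) • (Φ 1 - 1)
      - starRingEnd ℂ x • (Φ circleIdFun - circleIdFun)
      - (x : ℂ) • star (Φ circleIdFun - circleIdFun) := by
    -- `map_star` applies because a positive `ℂ`-linear map between C⋆-algebras commutes with `star`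
    simp only [circleSqDist, map_sub, map_smul, map_star, star_sub, smul_sub]
    abel
  calc ‖Φ (circleSqDist x) x‖ = ‖(Φ (circleSqDist x) - circleSqDist x) x‖ := by
        simp [circleSqDist_apply]
    _ ≤ ‖Φ (circleSqDist x) - circleSqDist x‖ := ContinuousMap.norm_coe_le_norm _ _
    _ ≤ 2 * ‖Φ 1 - 1‖ + ‖Φ circleIdFun - circleIdFun‖ + ‖Φ circleIdFun - circleIdFun‖ := by
        rw [hΦ]
        refine (norm_sub_le _ _).trans
          (add_le_add ((norm_sub_le _ _).trans (add_le_add ?_ ?_)) ?_)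
        · rw [norm_smul, Complex.norm_two]
        · rw [norm_smul, Complex.norm_conj, hx, one_mul]
        · rw [norm_smul, hx, one_mul, norm_star]
    _ = 2 * ‖Φ 1 - 1‖ + 2 * ‖Φ circleIdFun - circleIdFun‖ := by ring

theorem norm_sub_le_of_norm_sub_le_add_mul_dist_sq {f : C(𝕋, ℂ)} (hf : IsSelfAdjoint f)
    {ε M : ℝ} (hε : 0 ≤ ε) (hM : 0 ≤ M) (hfM : ∀ x z, ‖f z - f x‖ ≤ ε + M * dist z x ^ 2) :
    ‖Φ f - f‖ ≤ ε * (1 + ‖Φ 1 - 1‖) + M * (2 * ‖Φ 1 - 1‖ + 2 * ‖Φ circleIdFun - circleIdFun‖)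
      + ‖f‖ * ‖Φ 1 - 1‖ := by
  refine (ContinuousMap.norm_le _ (by positivity)).mpr fun x => ?_
  set h : C(𝕋, ℂ) := ε • 1 + M • circleSqDist x
  have hh : IsSelfAdjoint h :=
    ((IsSelfAdjoint.all ε).smul (.one _)).add
      ((IsSelfAdjoint.all M).smul (isSelfAdjoint_circleSqDist x))
  have hfh (z : 𝕋) : ‖f z - f x‖ ≤ (h z).re := by
    simpa [h, circleSqDist_apply, ← Complex.ofReal_pow] using hfM x z
  have hΦ1 : ‖Φ 1 x‖ ≤ 1 + ‖Φ 1 - 1‖ :=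
    calc ‖Φ 1 x‖ = ‖1 + (Φ 1 - 1) x‖ := by simp
      _ ≤ 1 + ‖Φ 1 - 1‖ :=
          (norm_add_le _ _).trans (by simpa using (Φ 1 - 1).norm_coe_le_norm x)
  have hΦq := Φ.norm_apply_circleSqDist_self_le x
  calc ‖(Φ f - f) x‖ ≤ ‖Φ h x‖ + ‖f‖ * ‖Φ 1 - 1‖ := Φ.norm_sub_apply_le hf hh x hfh
    _ ≤ ε * ‖Φ 1 x‖ + M * ‖Φ (circleSqDist x) x‖ + ‖f‖ * ‖Φ 1 - 1‖ := by
        gcongr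
        simp only [h, map_add, map_smul_of_tower, ContinuousMap.add_apply,
          ContinuousMap.smul_apply]
        refine (norm_add_le _ _).trans ?_
        rw [norm_smul, norm_smul, Real.norm_of_nonneg hε, Real.norm_of_nonneg hM]
    _ ≤ _ := by gcongr

end PositiveLinearMap

theorem PositiveLinearMap.tendsto_norm_sub_of_isSelfAdjoint {ι : Type*} {l : Filter ι}
    (Φ : ι → C(𝕋, ℂ) →ₚ[ℂ] C(𝕋, ℂ)) (h1 : Tendsto (fun n => ‖Φ n 1 - 1‖) l (𝓝 0))
    (hz : Tendsto (fun n => ‖Φ n circleIdFun - circleIdFun‖) l (𝓝 0)) {f : C(𝕋, ℂ)}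
    (hf : IsSelfAdjoint f) : Tendsto (fun n => ‖Φ n f - f‖) l (𝓝 0) := by
  refine NormedAddGroup.tendsto_nhds_zero.mpr fun ε hε => ?_
  obtain ⟨M, hM, hfM⟩ := f.exists_norm_sub_le_add_mul_dist_sq (half_pos hε)
  have hbound : Tendsto (fun n => ε / 2 * (1 + ‖Φ n 1 - 1‖)
      + M * (2 * ‖Φ n 1 - 1‖ + 2 * ‖Φ n circleIdFun - circleIdFun‖) + ‖f‖ * ‖Φ n 1 - 1‖)
      l (𝓝 (ε / 2)) := by
    simpa using (((h1.const_add 1).const_mul (ε / 2)).add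
      (((h1.const_mul 2).add (hz.const_mul 2)).const_mul M)).add (h1.const_mul ‖f‖)
  filter_upwards [hbound.eventually_lt_const (half_lt_self hε)] with n hn
  rw [norm_norm]
  exact ((Φ n).norm_sub_le_of_norm_sub_le_add_mul_dist_sq hf (half_pos hε).le hM hfM).trans_lt hn

/-- Complex Korovkin theorem on the unit circle `𝕋 = {z ∈ ℂ : |z| = 1}`: if a sequence of
positive linear maps on `C(𝕋)` converges uniformly to the identity on `1` and `z`, then it
converges uniformly to the identity on all of `C(𝕋)`. -/
theorem korovkin_circle
    (T : ℕ → (C(↥(Metric.sphere (0 : ℂ) 1), ℂ) →ₗ[ℂ] C(↥(Metric.sphere (0 : ℂ) 1), ℂ)))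
    (hpos : ∀ n, ∀ f : C(↥(Metric.sphere (0 : ℂ) 1), ℂ),
      (∀ z, (f z).im = 0 ∧ 0 ≤ (f z).re) →
      ∀ z, ((T n f) z).im = 0 ∧ 0 ≤ ((T n f) z).re)
    (h1 : Tendsto (fun n => ‖T n 1 - 1‖) atTop (nhds 0))
    (hz : Tendsto (fun n => ‖T n circleIdFun - circleIdFun‖) atTop (nhds 0)) :
    ∀ f : C(↥(Metric.sphere (0 : ℂ) 1), ℂ),
      Tendsto (fun n => ‖T n f - f‖) atTop (nhds 0) := by
  let Φ (n : ℕ) : C(𝕋, ℂ) →ₚ[ℂ] C(𝕋, ℂ) := .mk₀ (T n) fun g hg =>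
    ContinuousMap.complex_nonneg_iff.mpr (hpos n g (ContinuousMap.complex_nonneg_iff.mp hg))
  exact tendsto_norm_sub_of_forall_isSelfAdjoint T fun g hg =>
    PositiveLinearMap.tendsto_norm_sub_of_isSelfAdjoint Φ h1 hz hg
end
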